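/- arXiv:2410.07028 — 6 statements merged into one kernel-verified Lean document; each statement's English description precedes it below -/
import Mathlib

section
/- For every cycle C_g of length g ≥ 5, there exists a permutation σ of the vertex set of C_g such that for every edge xy of C_g, the pair σ(x)σ(y) is not an edge of C_g. -/
/-!
View `C_g` as the circulant graph of `ℤ/g` with jump `1`. A permutation is then special as soon as
the images of any two consecutive vertices differ by `±k` with `2 ≤ k ≤ g - 2`. For odd `g`,
doubling is a permutation with all such differences equal to `2`. For even `g = 2m` doubling is not
injective; instead send the first half `x < m` to `2x`, which runs through the even residues
`0, 2, …, 2m - 2`, and the second half to `1 - 2x`, which runs through the odd residues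
`1, -1, -3, …, 3`. The differences are then `2`, `3` at the junction, `-2`, and `-3` when
closing the cycle, so `g ≥ 6` suffices.
-/

open SimpleGraph
open scoped Fin.CommRing

def SimpleGraph.IsSpecialPerm {V : Type*} (G : SimpleGraph V) (σ : Equiv.Perm V) : Prop :=
  ∀ x y, G.Adj x y → ¬G.Adj (σ x) (σ y)

theorem natCast_ne_one_of_two_le {R : Type*} [AddGroupWithOne R] {g k : ℕ} [CharP R g]
    (hk : 2 ≤ k) (hkg : k < g) : (k : R) ≠ 1 := by
  intro h
  have hdvd : g ∣ k - 1 := by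
    rw [← CharP.cast_eq_zero_iff R, Nat.cast_sub (by omega), h, Nat.cast_one, sub_self]
  exact absurd (Nat.le_of_dvd (by omega) hdvd) (by omega)

theorem natCast_ne_neg_one_of_add_two_le {R : Type*} [AddGroupWithOne R] {g k : ℕ} [CharP R g]
    (hk : 0 < k) (hkg : k + 2 ≤ g) : (k : R) ≠ -1 := by
  intro h
  have hdvd : g ∣ k + 1 := by
    rw [← CharP.cast_eq_zero_iff R, Nat.cast_add_one, h, neg_add_cancel]
  exact absurd (Nat.le_of_dvd (by omega) hdvd) (by omega)

theorem two_mul_ne_one_of_charP {R : Type*} [CommRing R] {m : ℕ} [CharP R (2 * m)] (hm : 0 < m)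
    (z : R) : 2 * z ≠ 1 := by
  intro h
  have hm0 : (m : R) = 0 := by
    calc (m : R) = m * (2 * z) := by rw [h, mul_one]
      _ = ((2 * m : ℕ) : R) * z := by push_cast; ring
      _ = 0 := by rw [CharP.cast_eq_zero, zero_mul]
  rw [CharP.cast_eq_zero_iff R (2 * m)] at hm0
  exact absurd (Nat.le_of_dvd hm hm0) (by omega)

theorem isSpecialPerm_circulantGraph_one {R : Type*} [AddCommGroupWithOne R] {g : ℕ} [CharP R g]
    (σ : Equiv.Perm R)
    (hσ : ∀ x, ∃ k : ℕ, 2 ≤ k ∧ k + 2 ≤ g ∧ (σ (x + 1) - σ x = k ∨ σ x - σ (x + 1) = k)) :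
    (circulantGraph ({1} : Set R)).IsSpecialPerm σ := by
  have hstep : ∀ a b : R, (∃ k : ℕ, 2 ≤ k ∧ k + 2 ≤ g ∧ (b - a = k ∨ a - b = k)) →
      ¬(a - b = 1 ∨ b - a = 1) := by
    rintro a b ⟨k, hk, hkg, hab⟩ h
    have hne_one : (k : R) ≠ 1 := natCast_ne_one_of_two_le hk (by omega)
    have hne_neg_one : (k : R) ≠ -1 := natCast_ne_neg_one_of_add_two_le (by omega) hkg
    rcases hab with hab | hab <;> rcases h with h | h
    · exact hne_neg_one (by rw [← hab, ← neg_sub, h])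
    · exact hne_one (hab ▸ h)
    · exact hne_one (hab ▸ h)
    · exact hne_neg_one (by rw [← hab, ← neg_sub, h])
  intro x y hxy
  simp only [circulantGraph_adj, Set.mem_singleton_iff] at hxy ⊢
  rintro ⟨-, h⟩
  rcases hxy.2 with hxy | hxy <;> rw [sub_eq_iff_eq_add'] at hxy <;> subst hxy
  · exact hstep _ _ (hσ y) (Or.symm h)
  · exact hstep _ _ (hσ x) h

theorem Fin.eq_of_two_mul_eq {n m : ℕ} (hn : n + 1 = 2 * m) {x y : Fin (n + 1)}
    (h : 2 * x = 2 * y) (hxy : x.val < m ↔ y.val < m) : x = y := by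
  have hmod : 2 * x.val ≡ 2 * y.val [MOD 2 * m] := by
    have hval := congrArg Fin.val h
    simp only [val_mul, coe_ofNat_eq_mod, hn, Nat.mod_mul_mod] at hval
    exact hval
  refine Fin.ext ((Nat.ModEq.mul_left_cancel' two_ne_zero hmod).eq_of_abs_lt ?_)
  have := x.isLt
  have := y.isLt
  rw [abs_sub_lt_iff]
  omega

theorem exists_isSpecialPerm_cycleGraph_of_odd {n m : ℕ} (hn : n + 1 = 2 * m + 1) (hm : 2 ≤ m) :
    ∃ σ : Equiv.Perm (Fin (n + 1)), (cycleGraph (n + 1)).IsSpecialPerm σ := by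
  have hg : ((2 * m + 1 : ℕ) : Fin (n + 1)) = 0 := by
    rw [CharP.cast_eq_zero_iff (Fin (n + 1)) (n + 1), hn]
  have hunit : (2 : Fin (n + 1)) * ((m : Fin (n + 1)) + 1) = 1 := by
    push_cast at hg
    linear_combination hg
  refine ⟨(Units.mkOfMulEqOne 2 _ hunit).mulLeft, ?_⟩
  rw [cycleGraph_eq_circulantGraph]
  refine isSpecialPerm_circulantGraph_one (g := n + 1) _ fun x => ⟨2, le_rfl, by omega, .inl ?_⟩
  simp only [Units.mulLeft_apply, Units.val_mkOfMulEqOne]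
  ring

theorem exists_isSpecialPerm_cycleGraph_of_even {n m : ℕ} (hn : n + 1 = 2 * m) (hm : 3 ≤ m) :
    ∃ σ : Equiv.Perm (Fin (n + 1)), (cycleGraph (n + 1)).IsSpecialPerm σ := by
  have : CharP (Fin (n + 1)) (2 * m) := hn ▸ inferInstance
  have h2m : 2 * (m : Fin (n + 1)) = 0 := by exact_mod_cast CharP.cast_eq_zero (Fin (n + 1)) (2 * m)
  let f : Fin (n + 1) → Fin (n + 1) := fun x => if x.val < m then 2 * x else 1 - 2 * x
  have hf_lt {x : Fin (n + 1)} (hx : x.val < m) : f x = 2 * x := if_pos hx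
  have hf_ge {x : Fin (n + 1)} (hx : m ≤ x.val) : f x = 1 - 2 * x := if_neg (by omega)
  have hinj : f.Injective := by
    intro x y h
    rcases lt_or_ge x.val m with hx | hx <;> rcases lt_or_ge y.val m with hy | hy
    · rw [hf_lt hx, hf_lt hy] at h
      exact Fin.eq_of_two_mul_eq hn h (iff_of_true hx hy)
    · rw [hf_lt hx, hf_ge hy] at h
      exact absurd (by linear_combination h) (two_mul_ne_one_of_charP (by omega) (x + y))
    · rw [hf_ge hx, hf_lt hy] at h
      exact absurd (by linear_combination -h) (two_mul_ne_one_of_charP (by omega) (x + y))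
    · rw [hf_ge hx, hf_ge hy] at h
      exact Fin.eq_of_two_mul_eq hn (by linear_combination -h) (by omega)
  refine ⟨Equiv.ofBijective f (Finite.injective_iff_bijective.mp hinj), ?_⟩
  rw [cycleGraph_eq_circulantGraph]
  refine isSpecialPerm_circulantGraph_one (g := 2 * m) _ fun x => ?_
  simp only [Equiv.ofBijective_apply]
  by_cases hlast : x = Fin.last n
  · subst hlast
    refine ⟨3, by omega, by omega, .inr ?_⟩
    rw [Fin.last_add_one, hf_ge (by rw [Fin.val_last]; omega), hf_lt (by rw [Fin.val_zero]; omega)]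
    linear_combination (-2) * Fin.last_add_one n
  have hx1 : (x + 1).val = x.val + 1 := by rw [Fin.val_add_one, if_neg hlast]
  rcases lt_trichotomy (x.val + 1) m with hx | hx | hx
  · refine ⟨2, le_rfl, by omega, .inl ?_⟩
    rw [hf_lt (by omega), hf_lt (by omega)]
    ring
  · have hxm : x + 1 = m := by rw [← Fin.cast_val_eq_self (x + 1), hx1, hx]
    refine ⟨3, by omega, by omega, .inl ?_⟩
    rw [hf_ge (by omega), hf_lt (by omega)]
    linear_combination (-4) * hxm - 2 * h2m
  · refine ⟨2, le_rfl, by omega, .inr ?_⟩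
    rw [hf_ge (by omega), hf_ge (by omega)]
    ring

theorem cycle_has_special_permutation (g : ℕ) (hg : 5 ≤ g) :
    ∃ σ : Equiv.Perm (Fin g), ∀ x y : Fin g,
      (SimpleGraph.cycleGraph g).Adj x y →
        ¬ (SimpleGraph.cycleGraph g).Adj (σ x) (σ y) := by
  obtain ⟨n, rfl⟩ : ∃ n, g = n + 1 := ⟨g - 1, by omega⟩
  rcases Nat.even_or_odd' (n + 1) with ⟨m, hm | hm⟩
  · exact exists_isSpecialPerm_cycleGraph_of_even hm (by omega)
  · exact exists_isSpecialPerm_cycleGraph_of_odd hm (by omega)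
end

section
/- For every path P_n on n ≥ 4 vertices, there exists a permutation σ of the vertex set of P_n such that for every edge xy of P_n, σ(x) and σ(y) are nonadjacent in P_n. -/
/-!
Place the first half `0, …, n/2 - 1` of the path on the odd vertices `1, 3, 5, …` and the second
half on the even vertices `0, 2, 4, …`. Consecutive vertices inside one half land two apart; the
only edge between the halves, `{n/2 - 1, n/2}`, lands on `{2 (n/2) - 1, 0}`, which are two or more
apart as soon as `n ≥ 4`.
-/

namespace Fin

def halvesToParity (n : ℕ) (i : Fin n) : Fin n :=
  ⟨if i.val < n / 2 then 2 * i.val + 1 else 2 * (i.val - n / 2), by split <;> omega⟩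

lemma val_halvesToParity {n : ℕ} (i : Fin n) :
    (halvesToParity n i : ℕ) = if i.val < n / 2 then 2 * i.val + 1 else 2 * (i.val - n / 2) :=
  rfl

lemma halvesToParity_injective (n : ℕ) : Function.Injective (halvesToParity n) := by
  intro x y h
  have hval := congrArg Fin.val h
  simp only [val_halvesToParity] at hval
  ext
  split_ifs at hval <;> omega

end Fin

lemma SimpleGraph.pathGraph_not_adj_halvesToParity {n : ℕ} (hn : 4 ≤ n) {x y : Fin n}
    (hxy : (pathGraph n).Adj x y) :
    ¬ (pathGraph n).Adj (Fin.halvesToParity n x) (Fin.halvesToParity n y) := by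
  rw [pathGraph_adj] at hxy ⊢
  simp only [Fin.val_halvesToParity]
  split_ifs <;> omega

theorem path_has_special_permutation (n : ℕ) (hn : 4 ≤ n) :
    ∃ σ : Equiv.Perm (Fin n), ∀ x y : Fin n,
      (SimpleGraph.pathGraph n).Adj x y →
        ¬ (SimpleGraph.pathGraph n).Adj (σ x) (σ y) :=
  ⟨Equiv.ofBijective _ (Fin.halvesToParity_injective n).bijective_of_finite,
    fun _ _ => SimpleGraph.pathGraph_not_adj_halvesToParity hn⟩
end

section
/- Let G be a disjoint union of paths P^(1),…,P^(t) (each of length at least 1) and cycles C^(1),…,C^(q) (each of length at least 5), and suppose that if q = 0 and t = 1 then the single path has length at least 3. Then there exists a permutation σ of V(G) such that for every edge xy of G, σ(x) and σ(y) are nonadjacent in G. -/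
lemma cyc_arith (m : ℕ) (hm : 5 ≤ m) : ∃ f : ℕ → ℕ,
    (∀ x, x < m → f x < m) ∧
    (∀ x, x < m → ∀ y, y < m → f x = f y → x = y) ∧
    (∀ x, x < m → ∀ y, y < m →
      (x + 1 = y ∨ y + 1 = x ∨ (x = 0 ∧ y + 1 = m) ∨ (y = 0 ∧ x + 1 = m)) →
      ¬(f x + 1 = f y ∨ f y + 1 = f x ∨ (f x = 0 ∧ f y + 1 = m) ∨ (f y = 0 ∧ f x + 1 = m))) := by
  refine ⟨fun x => if x < (m+1)/2 then 2*x else if m % 2 = 1 then 2*(x - (m+1)/2) + 1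
    else if x = m/2 then 1 else m + 1 - 2*(x - m/2), ?_, ?_, ?_⟩
  · intro x hx; simp only []; split_ifs <;> omega
  · intro x hx y hy h; simp only [] at h; split_ifs at h <;> omega
  · intro x hx y hy hadj h
    simp only [] at h
    split_ifs at h <;>
      (try simp only [false_and, and_false, false_or, or_false] at h) <;> omega



lemma path_arith (N : ℕ) (hN : 4 ≤ N) : ∃ f : ℕ → ℕ,
    (∀ x, x < N → f x < N) ∧
    (∀ x, x < N → ∀ y, y < N → f x = f y → x = y) ∧
    (∀ x, x < N → ∀ y, y < N → (x + 1 = y ∨ y + 1 = x) →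
      ¬(f x + 1 = f y ∨ f y + 1 = f x)) := by
  refine ⟨fun x => if x < N/2 then 2*x+1 else 2*(x - N/2), ?_, ?_, ?_⟩
  · intro x hx; simp only []; split_ifs <;> omega
  · intro x hx y hy h; simp only [] at h; split_ifs at h <;> omega
  · intro x hx y hy hadj h
    simp only [] at h
    split_ifs at h <;> omega

lemma perm_of_fn {m : ℕ} (f : ℕ → ℕ) (h1 : ∀ x, x < m → f x < m)
    (h2 : ∀ x, x < m → ∀ y, y < m → f x = f y → x = y) :
    ∃ ρ : Equiv.Perm (Fin m), ∀ i : Fin m, (ρ i).val = f i.val := by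
  have hinj : Function.Injective (fun i : Fin m => (⟨f i.val, h1 _ i.isLt⟩ : Fin m)) := by
    intro a b hab
    exact Fin.ext (h2 _ a.isLt _ b.isLt (by simpa [Fin.ext_iff] using hab))
  exact ⟨Equiv.ofBijective _ ((Finite.injective_iff_bijective).1 hinj), fun i => rfl⟩

lemma blocks {ι : Type} [Fintype ι] (w : ι → ℕ) :
    ∃ o : ι → ℕ, (∀ c, o c + w c ≤ ∑ c', w c') ∧
      (∀ c c', c ≠ c' → (o c + w c ≤ o c') ∨ (o c' + w c' ≤ o c)) := by
  classical
  have rinj : Function.Injective (fun c : ι => ((Fintype.equivFin ι) c).val) := fun a b hab =>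
    (Fintype.equivFin ι).injective (Fin.ext hab)
  set r : ι → ℕ := fun c => ((Fintype.equivFin ι) c).val with hr
  have main : ∀ c c' : ι, r c < r c' →
      (∑ d ∈ Finset.univ.filter (fun d => r d < r c), w d) + w c ≤
        ∑ d ∈ Finset.univ.filter (fun d => r d < r c'), w d := by
    intro c c' hlt
    have h1 : c ∉ Finset.univ.filter (fun d => r d < r c) := by simp
    have h2 : insert c (Finset.univ.filter (fun d => r d < r c)) ⊆
        Finset.univ.filter (fun d => r d < r c') := by
      intro d hd
      rcases Finset.mem_insert.mp hd with rfl | hd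
      · simp [hlt]
      · simp only [Finset.mem_filter, Finset.mem_univ, true_and] at hd ⊢; omega
    have h3 := Finset.sum_le_sum_of_subset (f := w) h2
    rw [Finset.sum_insert h1] at h3
    omega
  refine ⟨fun c => ∑ d ∈ Finset.univ.filter (fun d => r d < r c), w d, ?_, ?_⟩
  · intro c
    have h1 : c ∉ Finset.univ.filter (fun d => r d < r c) := by simp
    have h3 := Finset.sum_le_sum_of_subset (f := w)
      (Finset.subset_univ (insert c (Finset.univ.filter (fun d => r d < r c))))
    rw [Finset.sum_insert h1] at h3
    simp only []
    omega
  · intro c c' hne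
    simp only []
    rcases lt_trichotomy (r c) (r c') with h | h | h
    · exact Or.inl (main c c' h)
    · exact absurd (rinj h) hne
    · exact Or.inr (main c' c h)

lemma pathglue {V : Type} [Fintype V] (G : SimpleGraph V)
    [Fintype G.ConnectedComponent]
    (Q : G.ConnectedComponent → Prop) [DecidablePred Q]
    (nn : G.ConnectedComponent → ℕ)
    (ψ : ∀ c, Q c → (G.induce c.supp ≃g SimpleGraph.pathGraph (nn c)))
    (hN : 4 ≤ ∑ c ∈ Finset.univ.filter Q, nn c) :
    ∃ pm : V → V, Function.Injective pm ∧
      (∀ x, ¬ Q (G.connectedComponentMk x) → pm x = x) ∧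
      (∀ x, Q (G.connectedComponentMk x) → Q (G.connectedComponentMk (pm x))) ∧
      (∀ x y, G.Adj x y → Q (G.connectedComponentMk x) → ¬ G.Adj (pm x) (pm y)) := by
  classical
  set mkc := G.connectedComponentMk with hmkc
  set PC := Finset.univ.filter Q with hPC
  set N := ∑ c ∈ PC, nn c with hNdef
  have hmem : ∀ x : V, x ∈ (mkc x).supp :=
    fun x => (SimpleGraph.ConnectedComponent.mem_supp_iff _ _).mpr rfl
  have cmem : ∀ c : G.ConnectedComponent, Q c → c ∈ PC := by
    intro c hc; simp [hPC, hc]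
  have hQc : ∀ c : ↥PC, Q c.1 := fun c => (Finset.mem_filter.mp c.2).2
  obtain ⟨o, key1x, key2x⟩ := blocks (fun c : ↥PC => nn c.1)
  have hNN : ∑ c' : ↥PC, nn c'.1 = N := Finset.sum_coe_sort PC nn
  have key1 : ∀ c : ↥PC, o c + nn c.1 ≤ ∑ c' : ↥PC, nn c'.1 := key1x
  have key2 : ∀ c c' : ↥PC, c ≠ c' →
      (o c + nn c.1 ≤ o c') ∨ (o c' + nn c'.1 ≤ o c) := key2x
  rw [hNN] at key1
  clear key1x key2x
  -- the bundled position function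
  have jlt : ∀ (c : G.ConnectedComponent) (h : Q c) (z : ↥c.supp), ((ψ c h) z).val < nn c :=
    fun c h z => ((ψ c h) z).isLt
  set B := {x : V // Q (mkc x)} with hB
  have posB : ∀ x : B, o ⟨mkc x.1, cmem _ x.2⟩ + ((ψ (mkc x.1) x.2) ⟨x.1, hmem x.1⟩).val < N := by
    intro x
    have h9 : o ⟨mkc x.1, cmem _ x.2⟩ + nn (mkc x.1) ≤ N := key1 ⟨mkc x.1, cmem _ x.2⟩
    have := jlt (mkc x.1) x.2 ⟨x.1, hmem x.1⟩
    omega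
  set posF : B → Fin N := fun x =>
    ⟨o ⟨mkc x.1, cmem _ x.2⟩ + ((ψ (mkc x.1) x.2) ⟨x.1, hmem x.1⟩).val, posB x⟩ with hposF
  -- transports
  have transportJ : ∀ (c c' : G.ConnectedComponent), c = c' → ∀ (h : Q c) (h' : Q c')
      (z : V) (hz : z ∈ c.supp) (hz' : z ∈ c'.supp),
      ((ψ c h) ⟨z, hz⟩).val = ((ψ c' h') ⟨z, hz'⟩).val := by
    rintro c c' rfl h h' z hz hz'; rfl
  have transportO : ∀ (c c' : G.ConnectedComponent), c = c' → ∀ (m : c ∈ PC) (m' : c' ∈ PC),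
      o ⟨c, m⟩ = o ⟨c', m'⟩ := by
    rintro c c' rfl m m'; rfl
  -- adjacency implies consecutive positions
  have POS : ∀ a b : B, G.Adj a.1 b.1 →
      ((posF a).val + 1 = (posF b).val ∨ (posF b).val + 1 = (posF a).val) := by
    intro a b hadj
    have hcc : mkc a.1 = mkc b.1 := SimpleGraph.ConnectedComponent.sound hadj.reachable
    have hb' : b.1 ∈ (mkc a.1).supp :=
      (SimpleGraph.ConnectedComponent.mem_supp_iff _ _).mpr hcc.symm
    have hind : (G.induce (mkc a.1).supp).Adj ⟨a.1, hmem a.1⟩ ⟨b.1, hb'⟩ := by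
      simpa using hadj
    have hpg := (ψ (mkc a.1) a.2).map_adj_iff.mpr hind
    rw [SimpleGraph.pathGraph_adj] at hpg
    have h1 : (posF b).val = o ⟨mkc a.1, cmem _ a.2⟩ + ((ψ (mkc a.1) a.2) ⟨b.1, hb'⟩).val := by
      show o ⟨mkc b.1, cmem _ b.2⟩ + ((ψ (mkc b.1) b.2) ⟨b.1, hmem b.1⟩).val = _
      rw [transportO (mkc b.1) (mkc a.1) hcc.symm,
        transportJ (mkc b.1) (mkc a.1) hcc.symm b.2 a.2 b.1 (hmem b.1) hb']
    have h2 : (posF a).val = o ⟨mkc a.1, cmem _ a.2⟩ + ((ψ (mkc a.1) a.2) ⟨a.1, hmem a.1⟩).val :=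
      rfl
    omega
  -- injectivity of posF
  have posInj : Function.Injective posF := by
    intro a b hab
    rw [Fin.ext_iff] at hab
    by_cases hcc : mkc a.1 = mkc b.1
    · have hoe := transportO (mkc a.1) (mkc b.1) hcc (cmem _ a.2) (cmem _ b.2)
      have h1 : (posF a).val = o ⟨mkc a.1, cmem _ a.2⟩ + ((ψ (mkc a.1) a.2) ⟨a.1, hmem a.1⟩).val := rfl
      have h2 : (posF b).val = o ⟨mkc b.1, cmem _ b.2⟩ + ((ψ (mkc b.1) b.2) ⟨b.1, hmem b.1⟩).val := rfl
      have hb' : b.1 ∈ (mkc a.1).supp :=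
        (SimpleGraph.ConnectedComponent.mem_supp_iff _ _).mpr hcc.symm
      have h3 := transportJ (mkc b.1) (mkc a.1) hcc.symm b.2 a.2 b.1 (hmem b.1) hb'
      have h4 : ((ψ (mkc a.1) a.2) ⟨a.1, hmem a.1⟩).val = ((ψ (mkc a.1) a.2) ⟨b.1, hb'⟩).val := by
        omega
      have h5 := (ψ (mkc a.1) a.2).toEquiv.injective (Fin.ext h4)
      have h6 := Subtype.ext_iff.mp h5
      exact Subtype.ext h6
    · exfalso
      have hne : (⟨mkc a.1, cmem _ a.2⟩ : ↥PC) ≠ ⟨mkc b.1, cmem _ b.2⟩ :=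
        fun h => hcc (congrArg Subtype.val h)
      have hja := jlt (mkc a.1) a.2 ⟨a.1, hmem a.1⟩
      have hjb := jlt (mkc b.1) b.2 ⟨b.1, hmem b.1⟩
      have hk2 : (o ⟨mkc a.1, cmem _ a.2⟩ + nn (mkc a.1) ≤ o ⟨mkc b.1, cmem _ b.2⟩) ∨
          (o ⟨mkc b.1, cmem _ b.2⟩ + nn (mkc b.1) ≤ o ⟨mkc a.1, cmem _ a.2⟩) := key2 _ _ hne
      have h1 : (posF a).val = o ⟨mkc a.1, cmem _ a.2⟩ + ((ψ (mkc a.1) a.2) ⟨a.1, hmem a.1⟩).val := rfl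
      have h2 : (posF b).val = o ⟨mkc b.1, cmem _ b.2⟩ + ((ψ (mkc b.1) b.2) ⟨b.1, hmem b.1⟩).val := rfl
      omega
  -- cardinality of B
  have hcard : Fintype.card B = N := by
    have E1 := (Equiv.sigmaFiberEquiv
      (fun x : B => (⟨mkc x.1, cmem _ x.2⟩ : ↥PC))).symm
    have E2 : ∀ c : ↥PC,
        {x : B // (⟨mkc x.1, cmem _ x.2⟩ : ↥PC) = c} ≃ ↥(c.1.supp) := by
      intro c
      refine ⟨fun z => ⟨z.1.1, ?_⟩, fun y => ⟨⟨y.1, ?_⟩, ?_⟩, ?_, ?_⟩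
      · exact (SimpleGraph.ConnectedComponent.mem_supp_iff _ _).mpr
          (congrArg Subtype.val z.2)
      · have : mkc y.1 = c.1 := (SimpleGraph.ConnectedComponent.mem_supp_iff _ _).mp y.2
        rw [this]; exact hQc c
      · exact Subtype.ext ((SimpleGraph.ConnectedComponent.mem_supp_iff _ _).mp y.2)
      · intro z; exact Subtype.ext (Subtype.ext rfl)
      · intro y; exact Subtype.ext rfl
    have h1 : Fintype.card B = ∑ c : ↥PC, Fintype.card ↥(c.1.supp) := by
      rw [Fintype.card_congr E1, Fintype.card_sigma]
      exact Finset.sum_congr rfl (fun c _ => Fintype.card_congr (E2 c))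
    have h2 : ∀ c : ↥PC, Fintype.card ↥(c.1.supp) = nn c.1 := by
      intro c
      rw [Fintype.card_congr ((ψ c.1 (hQc c)).toEquiv), Fintype.card_fin]
    rw [h1, Finset.sum_congr rfl (fun c _ => h2 c), hNN]
  have posBij : Function.Bijective posF :=
    (Fintype.bijective_iff_injective_and_card posF).mpr ⟨posInj, by rw [hcard, Fintype.card_fin]⟩
  set posE := Equiv.ofBijective posF posBij with hposE
  -- the permutation of positions
  obtain ⟨f, hf1, hf2, hf3⟩ := path_arith N hN
  obtain ⟨pp, hpp⟩ := perm_of_fn f hf1 hf2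
  -- final function
  refine ⟨fun x => if h : Q (mkc x) then (posE.symm (pp (posE ⟨x, h⟩))).1 else x, ?_, ?_, ?_, ?_⟩
  case refine_2 => intro x h; exact dif_neg h
  case refine_3 =>
    intro x h; dsimp only; rw [dif_pos h]
    exact (posE.symm (pp (posE ⟨x, h⟩))).2
  case refine_1 =>
    intro x y hxy
    dsimp only at hxy
    by_cases h : Q (mkc x) <;> by_cases h' : Q (mkc y)
    · rw [dif_pos h, dif_pos h'] at hxy
      have h7 : (⟨x, h⟩ : B) = ⟨y, h'⟩ :=
        posE.injective (pp.injective (posE.symm.injective (Subtype.ext hxy)))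
      exact Subtype.ext_iff.mp h7
    · rw [dif_pos h, dif_neg h'] at hxy
      exact absurd (by rw [← hxy]; exact (posE.symm (pp (posE ⟨x, h⟩))).2) h'
    · rw [dif_neg h, dif_pos h'] at hxy
      exact absurd (by rw [hxy]; exact (posE.symm (pp (posE ⟨y, h'⟩))).2) h
    · rwa [dif_neg h, dif_neg h'] at hxy
  case refine_4 =>
    intro x y hadj h hco
    dsimp only at hco
    have hcc : mkc x = mkc y := SimpleGraph.ConnectedComponent.sound hadj.reachable
    have h' : Q (mkc y) := hcc ▸ h
    rw [dif_pos h, dif_pos h'] at hco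
    set A := posE.symm (pp (posE ⟨x, h⟩)) with hA
    set Bb := posE.symm (pp (posE ⟨y, h'⟩)) with hBb
    have h3 := POS A Bb hco
    have h4 : posF A = pp (posE ⟨x, h⟩) := by
      rw [hA]; exact posE.apply_symm_apply _
    have h5 : posF Bb = pp (posE ⟨y, h'⟩) := by
      rw [hBb]; exact posE.apply_symm_apply _
    have h6 := POS ⟨x, h⟩ ⟨y, h'⟩ hadj
    have e1 : (posF A).val = f (posE ⟨x, h⟩).val := by rw [h4]; exact hpp _
    have e2 : (posF Bb).val = f (posE ⟨y, h'⟩).val := by rw [h5]; exact hpp _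
    have e3 : (posF ⟨x, h⟩).val = (posE ⟨x, h⟩).val := rfl
    have e4 : (posF ⟨y, h'⟩).val = (posE ⟨y, h'⟩).val := rfl
    exact hf3 (posE ⟨x, h⟩).val (posE ⟨x, h⟩).isLt (posE ⟨y, h'⟩).val (posE ⟨y, h'⟩).isLt
      (by omega) (by omega)


lemma glue {V : Type} [Fintype V] (G : SimpleGraph V) (P : G.ConnectedComponent → Prop)
    (e : ∀ c, P c → (↥c.supp ≃ ↥c.supp))
    (he : ∀ (c) (h : P c) (x y : ↥c.supp), G.Adj x.1 y.1 →
      ¬ G.Adj (e c h x).1 (e c h y).1) :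
    ∃ cy : V → V, Function.Injective cy ∧
      (∀ x, G.connectedComponentMk (cy x) = G.connectedComponentMk x) ∧
      (∀ x, ¬ P (G.connectedComponentMk x) → cy x = x) ∧
      (∀ x y, G.Adj x y → P (G.connectedComponentMk x) → ¬ G.Adj (cy x) (cy y)) := by
  classical
  have hmem : ∀ x : V, x ∈ (G.connectedComponentMk x).supp :=
    fun x => (SimpleGraph.ConnectedComponent.mem_supp_iff _ _).mpr rfl
  have transport : ∀ (c c' : G.ConnectedComponent), c = c' → ∀ (h : P c) (h' : P c')
      (x : V) (hx : x ∈ c.supp) (hx' : x ∈ c'.supp),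
      (e c h ⟨x, hx⟩).1 = (e c' h' ⟨x, hx'⟩).1 := by
    rintro c c' rfl h h' x hx hx'; rfl
  set mkc := G.connectedComponentMk with hmkc
  refine ⟨fun x => if h : P (mkc x) then (e (mkc x) h ⟨x, hmem x⟩).1 else x, ?_, ?_, ?_, ?_⟩
  case refine_2 =>
    intro x; dsimp only; split_ifs with h
    · exact (SimpleGraph.ConnectedComponent.mem_supp_iff _ _).mp (e (mkc x) h ⟨x, hmem x⟩).2
    · rfl
  case refine_3 => intro x h; exact dif_neg h
  case refine_1 =>
    intro x y hxy
    dsimp only at hxy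
    by_cases h : P (mkc x)
    · have hmkx : mkc ((e (mkc x) h ⟨x, hmem x⟩).1) = mkc x :=
        (SimpleGraph.ConnectedComponent.mem_supp_iff _ _).mp (e (mkc x) h ⟨x, hmem x⟩).2
      by_cases h' : P (mkc y)
      · rw [dif_pos h, dif_pos h'] at hxy
        have hmky : mkc ((e (mkc y) h' ⟨y, hmem y⟩).1) = mkc y :=
          (SimpleGraph.ConnectedComponent.mem_supp_iff _ _).mp (e (mkc y) h' ⟨y, hmem y⟩).2
        have hcc : mkc x = mkc y := by rw [← hmkx, ← hmky, hxy]
        have hy' : y ∈ (mkc x).supp :=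
          (SimpleGraph.ConnectedComponent.mem_supp_iff _ _).mpr hcc.symm
        rw [transport (mkc y) (mkc x) hcc.symm h' h y (hmem y) hy'] at hxy
        have := (e (mkc x) h).injective (Subtype.ext hxy)
        exact congrArg Subtype.val this
      · rw [dif_pos h, dif_neg h'] at hxy
        exact absurd (by rw [← hxy, hmkx]; exact h : P (mkc y)) h'
    · by_cases h' : P (mkc y)
      · rw [dif_neg h, dif_pos h'] at hxy
        have hmky : mkc ((e (mkc y) h' ⟨y, hmem y⟩).1) = mkc y :=
          (SimpleGraph.ConnectedComponent.mem_supp_iff _ _).mp (e (mkc y) h' ⟨y, hmem y⟩).2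
        exact absurd (by rw [hxy, hmky]; exact h' : P (mkc x)) h
      · rwa [dif_neg h, dif_neg h'] at hxy
  case refine_4 =>
    intro x y hadj h hco
    dsimp only at hco
    have hcc : mkc x = mkc y := SimpleGraph.ConnectedComponent.sound hadj.reachable
    have h' : P (mkc y) := hcc ▸ h
    rw [dif_pos h, dif_pos h'] at hco
    have hy' : y ∈ (mkc x).supp :=
      (SimpleGraph.ConnectedComponent.mem_supp_iff _ _).mpr hcc.symm
    rw [transport (mkc y) (mkc x) hcc.symm h' h y (hmem y) hy'] at hco
    exact he (mkc x) h ⟨x, hmem x⟩ ⟨y, hy'⟩ hadj hco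


lemma cycAdj {m : ℕ} (hm : 5 ≤ m) (u v : Fin m) :
    (SimpleGraph.cycleGraph m).Adj u v ↔
      (u.val + 1 = v.val ∨ v.val + 1 = u.val ∨
        (u.val = 0 ∧ v.val + 1 = m) ∨ (v.val = 0 ∧ u.val + 1 = m)) := by
  obtain ⟨k, rfl⟩ : ∃ k, m = k + 2 := ⟨m - 2, by omega⟩
  rw [SimpleGraph.cycleGraph_adj]
  have e1 : u - v = 1 ↔ u.val = (1 + v.val) % (k + 2) := by
    rw [sub_eq_iff_eq_add', Fin.ext_iff, Fin.add_def, Fin.val_one]; simp [Nat.add_comm]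
  have e2 : v - u = 1 ↔ v.val = (1 + u.val) % (k + 2) := by
    rw [sub_eq_iff_eq_add', Fin.ext_iff, Fin.add_def, Fin.val_one]; simp [Nat.add_comm]
  rw [e1, e2]
  have hu := u.isLt
  have hv := v.isLt
  have h2v : (v.val + 1 < k + 2 ∧ (1 + v.val) % (k + 2) = 1 + v.val) ∨
      (v.val + 1 = k + 2 ∧ (1 + v.val) % (k + 2) = 0) := by
    rcases Nat.lt_or_ge (1 + v.val) (k + 2) with h | h
    · exact Or.inl ⟨by omega, Nat.mod_eq_of_lt h⟩
    · right
      have h3 : 1 + v.val = k + 2 := by omega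
      exact ⟨by omega, by rw [h3, Nat.mod_self]⟩
  have h2u : (u.val + 1 < k + 2 ∧ (1 + u.val) % (k + 2) = 1 + u.val) ∨
      (u.val + 1 = k + 2 ∧ (1 + u.val) % (k + 2) = 0) := by
    rcases Nat.lt_or_ge (1 + u.val) (k + 2) with h | h
    · exact Or.inl ⟨by omega, Nat.mod_eq_of_lt h⟩
    · right
      have h3 : 1 + u.val = k + 2 := by omega
      exact ⟨by omega, by rw [h3, Nat.mod_self]⟩
  set A := (1 + v.val) % (k + 2) with hA
  set B := (1 + u.val) % (k + 2) with hB
  clear_value A B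
  clear hA hB e1 e2
  omega


/-- A graph is a disjoint union of paths (each with ≥ 1 edge) and cycles
(each of length ≥ 5) iff every connected component is isomorphic to such a
path or cycle. -/
theorem disjoint_union_paths_cycles_special_permutation
    {V : Type} [Fintype V] (G : SimpleGraph V)
    (hcomp : ∀ c : G.ConnectedComponent,
      (∃ n : ℕ, 2 ≤ n ∧ Nonempty (G.induce c.supp ≃g SimpleGraph.pathGraph n)) ∨
      (∃ m : ℕ, 5 ≤ m ∧ Nonempty (G.induce c.supp ≃g SimpleGraph.cycleGraph m)))
    (hsingle : G.Connected → ∀ n : ℕ, Nonempty (G ≃g SimpleGraph.pathGraph n) → 4 ≤ n) :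
    ∃ σ : Equiv.Perm V, ∀ x y : V, G.Adj x y → ¬ G.Adj (σ x) (σ y) := by
  classical
  have finV : Finite V := Finite.of_fintype V
  have : Fintype G.ConnectedComponent := Fintype.ofFinite _
  set mkc := G.connectedComponentMk with hmkc
  have hmem : ∀ x : V, x ∈ (mkc x).supp :=
    fun x => (SimpleGraph.ConnectedComponent.mem_supp_iff _ _).mpr rfl
  have crossAdj : ∀ p q : V, mkc p ≠ mkc q → ¬ G.Adj p q :=
    fun p q h hadj => h (SimpleGraph.ConnectedComponent.sound hadj.reachable)
  set isCyc : G.ConnectedComponent → Prop :=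
    fun c => ∃ m : ℕ, 5 ≤ m ∧ Nonempty (G.induce c.supp ≃g SimpleGraph.cycleGraph m)
    with hisCyc
  -- cycle-component permutations
  have key : ∀ (c : G.ConnectedComponent), isCyc c → ∃ ec : ↥c.supp ≃ ↥c.supp,
      ∀ x y : ↥c.supp, G.Adj x.1 y.1 → ¬ G.Adj (ec x).1 (ec y).1 := by
    intro c hc
    obtain ⟨m, hm5, ⟨φ⟩⟩ := hc
    obtain ⟨f, hf1, hf2, hf3⟩ := cyc_arith m hm5
    obtain ⟨ρ, hρ⟩ := perm_of_fn f hf1 hf2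
    refine ⟨(φ.toEquiv.trans ρ).trans φ.toEquiv.symm, ?_⟩
    intro x y hadj hco
    have hx : (G.induce c.supp).Adj x y := by simpa using hadj
    have h1 := φ.map_adj_iff.mpr hx
    have hco' : (G.induce c.supp).Adj (φ.symm (ρ (φ x))) (φ.symm (ρ (φ y))) := by
      exact hco
    have h2 := φ.symm.map_adj_iff.mp hco'
    rw [cycAdj hm5] at h1 h2
    rw [hρ (φ x), hρ (φ y)] at h2
    exact hf3 _ (φ x).isLt _ (φ y).isLt h1 h2
  choose eC heC using key
  obtain ⟨cy, cyInj, cyMk, cyFix, cyE⟩ := glue G isCyc eC heC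
  rw [← hmkc] at cyMk cyFix cyE
  -- path components data
  have hpath : ∀ c, ¬ isCyc c →
      ∃ n, 2 ≤ n ∧ Nonempty (G.induce c.supp ≃g SimpleGraph.pathGraph n) :=
    fun c h => (hcomp c).resolve_right h
  set nn : G.ConnectedComponent → ℕ :=
    fun c => if h : ¬ isCyc c then (hpath c h).choose else 0 with hnn
  have hnn2 : ∀ c, ¬ isCyc c → 2 ≤ nn c := by
    intro c h
    have : nn c = (hpath c h).choose := by rw [hnn]; dsimp only; rw [dif_pos h]
    rw [this]; exact (hpath c h).choose_spec.1
  have ψfun : ∀ c, ¬ isCyc c → (G.induce c.supp ≃g SimpleGraph.pathGraph (nn c)) := by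
    intro c h
    have : nn c = (hpath c h).choose := by rw [hnn]; dsimp only; rw [dif_pos h]
    rw [this]
    exact (hpath c h).choose_spec.2.some
  set PC := Finset.univ.filter (fun c => ¬ isCyc c) with hPC
  set N := ∑ c ∈ PC, nn c with hNdef
  by_cases hN : 4 ≤ N
  · -- main case: path part has at least 4 vertices
    obtain ⟨pm, pmInj, pmFix, pmQ, pmE⟩ := pathglue G (fun c => ¬ isCyc c) nn ψfun hN
    rw [← hmkc] at pmFix pmQ pmE
    have hbij : Function.Bijective (fun x => pm (cy x)) :=
      (Finite.injective_iff_bijective).mp (pmInj.comp cyInj)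
    refine ⟨Equiv.ofBijective _ hbij, ?_⟩
    intro x y hadj
    show ¬ G.Adj (pm (cy x)) (pm (cy y))
    have hcc : mkc x = mkc y := SimpleGraph.ConnectedComponent.sound hadj.reachable
    by_cases h : isCyc (mkc x)
    · have h1 := cyE x y hadj h
      have h2 : ¬ ¬ isCyc (mkc (cy x)) := by rw [cyMk]; exact not_not_intro h
      have h3 : ¬ ¬ isCyc (mkc (cy y)) := by
        rw [cyMk]; exact not_not_intro (hcc ▸ h)
      rw [pmFix _ h2, pmFix _ h3]
      exact h1
    · rw [cyFix x h, cyFix y (by rw [← hcc]; exact h)]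
      exact pmE x y hadj h
  · -- small path part
    by_cases hPCe : PC = ∅
    · -- no path components at all
      have hbij : Function.Bijective cy := (Finite.injective_iff_bijective).mp cyInj
      refine ⟨Equiv.ofBijective _ hbij, ?_⟩
      intro x y hadj
      show ¬ G.Adj (cy x) (cy y)
      have h : isCyc (mkc x) := by
        by_contra h
        have : mkc x ∈ PC := by rw [hPC]; simp [h]
        rw [hPCe] at this; exact absurd this (Finset.notMem_empty _)
      exact cyE x y hadj h
    · -- exactly one path component, of size 2 or 3
      obtain ⟨c0, hc0⟩ := Finset.nonempty_iff_ne_empty.mpr hPCe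
      have hq0 : ¬ isCyc c0 := (Finset.mem_filter.mp hc0).2
      have huniq : ∀ c ∈ PC, c = c0 := by
        by_contra hcon
        push_neg at hcon
        obtain ⟨c1, hc1, hne⟩ := hcon
        have hsub : {c0, c1} ⊆ PC := by
          intro d hd
          rcases Finset.mem_insert.mp hd with rfl | hd
          · exact hc0
          · rwa [Finset.mem_singleton.mp hd]
        have hsum := Finset.sum_le_sum_of_subset (f := nn) hsub
        rw [Finset.sum_pair (Ne.symm hne)] at hsum
        have g1 := hnn2 c0 hq0
        have g2 := hnn2 c1 (Finset.mem_filter.mp hc1).2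
        omega
      have hPCeq : PC = {c0} := by
        apply Finset.eq_singleton_iff_unique_mem.mpr
        exact ⟨hc0, huniq⟩
      have hNn0 : N = nn c0 := by rw [hNdef, hPCeq, Finset.sum_singleton]
      have hn0small : nn c0 ≤ 3 := by omega
      have hn02 : 2 ≤ nn c0 := hnn2 c0 hq0
      have honly : ∀ c, ¬ isCyc c → c = c0 := by
        intro c h
        exact huniq c (by rw [hPC]; simp [h])
      have ψ0 := ψfun c0 hq0
      by_cases hcyc : ∃ c1, isCyc c1
      · -- small path + at least one cycle: use a transposition trick
        obtain ⟨c1, hc1⟩ := hcyc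
        have hc0c1 : c0 ≠ c1 := fun h => hq0 (h ▸ hc1)
        obtain ⟨m, hm5, ⟨φ1⟩⟩ := hc1
        set u := (φ1.symm ⟨0, by omega⟩).1 with hu
        set w := (φ1.symm ⟨1, by omega⟩).1 with hw
        have hum : u ∈ c1.supp := (φ1.symm _).2
        have hwm : w ∈ c1.supp := (φ1.symm _).2
        have hmku : mkc u = c1 := (SimpleGraph.ConnectedComponent.mem_supp_iff _ _).mp hum
        have hmkw : mkc w = c1 := (SimpleGraph.ConnectedComponent.mem_supp_iff _ _).mp hwm
        have hicyc1 : isCyc c1 := ⟨m, hm5, ⟨φ1⟩⟩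
        have huw : u ≠ w := by
          intro h
          have h2 : (⟨0, by omega⟩ : Fin m) = ⟨1, by omega⟩ :=
            φ1.symm.toEquiv.injective (Subtype.ext h)
          simpa using congrArg Fin.val h2
        set a := (ψ0.symm ⟨0, by omega⟩).1 with ha
        set b := (ψ0.symm ⟨1, by omega⟩).1 with hb
        have ham : a ∈ c0.supp := (ψ0.symm _).2
        have hbm : b ∈ c0.supp := (ψ0.symm _).2
        have hmka : mkc a = c0 := (SimpleGraph.ConnectedComponent.mem_supp_iff _ _).mp ham
        have hmkb : mkc b = c0 := (SimpleGraph.ConnectedComponent.mem_supp_iff _ _).mp hbm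
        have hab : a ≠ b := by
          intro h
          have h2 : (⟨0, by omega⟩ : Fin (nn c0)) = ⟨1, by omega⟩ :=
            ψ0.symm.toEquiv.injective (Subtype.ext h)
          simpa using congrArg Fin.val h2
        have hau : a ≠ u := fun h => hc0c1 (by rw [← hmka, h, hmku])
        have hbu : b ≠ u := fun h => hc0c1 (by rw [← hmkb, h, hmku])
        have haw : a ≠ w := fun h => hc0c1 (by rw [← hmka, h, hmkw])
        have hbw : b ≠ w := fun h => hc0c1 (by rw [← hmkb, h, hmkw])
        have pclass : ∀ p q : V, G.Adj p q → mkc p = c0 → ∃ i j : Fin (nn c0),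
            (ψ0.symm i).1 = p ∧ (ψ0.symm j).1 = q ∧
              (i.val + 1 = j.val ∨ j.val + 1 = i.val) := by
          intro p q hadj hp0
          have hccpq : mkc p = mkc q := SimpleGraph.ConnectedComponent.sound hadj.reachable
          have hq0' : mkc q = c0 := by rw [← hccpq]; exact hp0
          have hpm : p ∈ c0.supp := (SimpleGraph.ConnectedComponent.mem_supp_iff _ _).mpr hp0
          have hqm : q ∈ c0.supp := (SimpleGraph.ConnectedComponent.mem_supp_iff _ _).mpr hq0'
          have hind : (G.induce c0.supp).Adj ⟨p, hpm⟩ ⟨q, hqm⟩ := by simpa using hadj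
          have hpg := ψ0.map_adj_iff.mpr hind
          refine ⟨ψ0 ⟨p, hpm⟩, ψ0 ⟨q, hqm⟩, ?_, ?_, ?_⟩
          · rw [ψ0.symm_apply_apply]
          · rw [ψ0.symm_apply_apply]
          · rwa [SimpleGraph.pathGraph_adj] at hpg
        rcases (by omega : nn c0 = 2 ∨ nn c0 = 3) with h23 | h23
        · -- path on 2 vertices
          have hbij : Function.Bijective (fun z => Equiv.swap a u (cy z)) :=
            (Finite.injective_iff_bijective).mp ((Equiv.swap a u).injective.comp cyInj)
          refine ⟨Equiv.ofBijective _ hbij, ?_⟩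
          intro x y hadj
          show ¬ G.Adj (Equiv.swap a u (cy x)) (Equiv.swap a u (cy y))
          intro hco
          have hcc : mkc x = mkc y := SimpleGraph.ConnectedComponent.sound hadj.reachable
          by_cases hxc : isCyc (mkc x)
          · have hnadj := cyE x y hadj hxc
            have hicy1 : isCyc (mkc (cy x)) := by rw [cyMk x]; exact hxc
            have hicy2 : isCyc (mkc (cy y)) := by rw [cyMk y, ← hcc]; exact hxc
            have hz1a : cy x ≠ a := fun h => hq0 (by rw [h, hmka] at hicy1; exact hicy1)
            have hz2a : cy y ≠ a := fun h => hq0 (by rw [h, hmka] at hicy2; exact hicy2)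
            by_cases e1 : cy x = u <;> by_cases e2 : cy y = u
            · exact hadj.ne (cyInj (e1.trans e2.symm))
            · rw [e1, Equiv.swap_apply_right, Equiv.swap_apply_of_ne_of_ne hz2a e2] at hco
              refine crossAdj a (cy y) ?_ hco
              rw [hmka, cyMk y, ← hcc]
              exact fun h => hq0 (by rw [h]; exact hxc)
            · rw [e2, Equiv.swap_apply_right, Equiv.swap_apply_of_ne_of_ne hz1a e1] at hco
              refine crossAdj (cy x) a ?_ hco
              rw [hmka, cyMk x]
              exact fun h => hq0 (by rw [← h]; exact hxc)
            · rw [Equiv.swap_apply_of_ne_of_ne hz1a e1,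
                Equiv.swap_apply_of_ne_of_ne hz2a e2] at hco
              exact hnadj hco
          · have hx0 : mkc x = c0 := honly _ hxc
            rw [cyFix x hxc, cyFix y (by rw [← hcc]; exact hxc)] at hco
            obtain ⟨i, j, hip, hjq, hcons⟩ := pclass x y hadj hx0
            have hi := i.isLt
            have hj := j.isLt
            rcases (by omega : (i.val = 0 ∧ j.val = 1) ∨ (i.val = 1 ∧ j.val = 0)) with
              ⟨h1, h2⟩ | ⟨h1, h2⟩
            · have hieq : i = ⟨0, by omega⟩ := Fin.ext h1
              have hjeq : j = ⟨1, by omega⟩ := Fin.ext h2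
              rw [hieq] at hip; rw [hjeq] at hjq
              have hxa : x = a := (ha.trans hip).symm
              have hyb : y = b := (hb.trans hjq).symm
              rw [hxa, hyb, Equiv.swap_apply_left,
                Equiv.swap_apply_of_ne_of_ne hab.symm hbu] at hco
              exact crossAdj u b (by rw [hmku, hmkb]; exact fun h => hc0c1 h.symm) hco
            · have hieq : i = ⟨1, by omega⟩ := Fin.ext h1
              have hjeq : j = ⟨0, by omega⟩ := Fin.ext h2
              rw [hieq] at hip; rw [hjeq] at hjq
              have hxb : x = b := (hb.trans hip).symm
              have hya : y = a := (ha.trans hjq).symm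
              rw [hxb, hya, Equiv.swap_apply_left,
                Equiv.swap_apply_of_ne_of_ne hab.symm hbu] at hco
              exact crossAdj u b (by rw [hmku, hmkb]; exact fun h => hc0c1 h.symm) hco.symm
        · -- path on 3 vertices
          set c := (ψ0.symm ⟨2, by omega⟩).1 with hc
          have hcm : c ∈ c0.supp := (ψ0.symm _).2
          have hmkc3 : mkc c = c0 := (SimpleGraph.ConnectedComponent.mem_supp_iff _ _).mp hcm
          have hac : a ≠ c := by
            intro h
            have h2 : (⟨0, by omega⟩ : Fin (nn c0)) = ⟨2, by omega⟩ :=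
              ψ0.symm.toEquiv.injective (Subtype.ext h)
            simpa using congrArg Fin.val h2
          have hbc : b ≠ c := by
            intro h
            have h2 : (⟨1, by omega⟩ : Fin (nn c0)) = ⟨2, by omega⟩ :=
              ψ0.symm.toEquiv.injective (Subtype.ext h)
            simpa using congrArg Fin.val h2
          have hcu : c ≠ u := fun h => hc0c1 (by rw [← hmkc3, h, hmku])
          have hcw : c ≠ w := fun h => hc0c1 (by rw [← hmkc3, h, hmkw])
          have hnac : ¬ G.Adj a c := by
            intro hadj
            have hind : (G.induce c0.supp).Adj ⟨a, ham⟩ ⟨c, hcm⟩ := by simpa using hadj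
            have h02 := ψ0.map_adj_iff.mpr hind
            have ea : (⟨a, ham⟩ : ↥c0.supp) = ψ0.symm ⟨0, by omega⟩ := Subtype.ext ha
            have ec : (⟨c, hcm⟩ : ↥c0.supp) = ψ0.symm ⟨2, by omega⟩ := Subtype.ext hc
            rw [ea, ec, ψ0.apply_symm_apply, ψ0.apply_symm_apply,
              SimpleGraph.pathGraph_adj] at h02
            simp at h02
          have hbij : Function.Bijective
              (fun z => Equiv.swap a u (Equiv.swap c w (cy z))) :=
            (Finite.injective_iff_bijective).mp
              ((Equiv.swap a u).injective.comp ((Equiv.swap c w).injective.comp cyInj))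
          refine ⟨Equiv.ofBijective _ hbij, ?_⟩
          intro x y hadj
          show ¬ G.Adj (Equiv.swap a u (Equiv.swap c w (cy x)))
            (Equiv.swap a u (Equiv.swap c w (cy y)))
          intro hco
          have hcc : mkc x = mkc y := SimpleGraph.ConnectedComponent.sound hadj.reachable
          by_cases hxc : isCyc (mkc x)
          · have hnadj := cyE x y hadj hxc
            have hicy1 : isCyc (mkc (cy x)) := by rw [cyMk x]; exact hxc
            have hicy2 : isCyc (mkc (cy y)) := by rw [cyMk y, ← hcc]; exact hxc
            have hz1a : cy x ≠ a := fun h => hq0 (by rw [h, hmka] at hicy1; exact hicy1)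
            have hz2a : cy y ≠ a := fun h => hq0 (by rw [h, hmka] at hicy2; exact hicy2)
            have hz1c : cy x ≠ c := fun h => hq0 (by rw [h, hmkc3] at hicy1; exact hicy1)
            have hz2c : cy y ≠ c := fun h => hq0 (by rw [h, hmkc3] at hicy2; exact hicy2)
            have hmz1 : mkc (cy x) = mkc x := cyMk x
            have hmz2 : mkc (cy y) = mkc x := by rw [cyMk y, ← hcc]
            have ev : ∀ z : V, z ≠ a → z ≠ c →
                (Equiv.swap a u (Equiv.swap c w z) = a ∧ z = u) ∨
                (Equiv.swap a u (Equiv.swap c w z) = c ∧ z = w) ∨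
                (Equiv.swap a u (Equiv.swap c w z) = z ∧ z ≠ u ∧ z ≠ w) := by
              intro z hza hzc
              by_cases e1 : z = u
              · left
                subst e1
                rw [Equiv.swap_apply_of_ne_of_ne (Ne.symm hcu) huw, Equiv.swap_apply_right]
                exact ⟨rfl, rfl⟩
              · by_cases e2 : z = w
                · right; left
                  subst e2
                  rw [Equiv.swap_apply_right,
                    Equiv.swap_apply_of_ne_of_ne (Ne.symm hac) hcu]
                  exact ⟨rfl, rfl⟩
                · right; right
                  rw [Equiv.swap_apply_of_ne_of_ne hzc e2,
                    Equiv.swap_apply_of_ne_of_ne hza e1]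
                  exact ⟨rfl, e1, e2⟩
            rcases ev (cy x) hz1a hz1c with ⟨e1, d1⟩ | ⟨e1, d1⟩ | ⟨e1, d1, d1'⟩ <;>
              rcases ev (cy y) hz2a hz2c with ⟨e2, d2⟩ | ⟨e2, d2⟩ | ⟨e2, d2, d2'⟩ <;>
              rw [e1, e2] at hco
            · exact hadj.ne (cyInj (d1.trans d2.symm))
            · exact hnac hco
            · exact crossAdj a (cy y)
                (by rw [hmka, hmz2]; exact fun h => hq0 (by rw [h]; exact hxc)) hco
            · exact hnac hco.symm
            · exact hadj.ne (cyInj (d1.trans d2.symm))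
            · exact crossAdj c (cy y)
                (by rw [hmkc3, hmz2]; exact fun h => hq0 (by rw [h]; exact hxc)) hco
            · exact crossAdj (cy x) a
                (by rw [hmka, hmz1]; exact fun h => hq0 (by rw [← h]; exact hxc)) hco
            · exact crossAdj (cy x) c
                (by rw [hmkc3, hmz1]; exact fun h => hq0 (by rw [← h]; exact hxc)) hco
            · exact hnadj hco
          · have hx0 : mkc x = c0 := honly _ hxc
            rw [cyFix x hxc, cyFix y (by rw [← hcc]; exact hxc)] at hco
            obtain ⟨i, j, hip, hjq, hcons⟩ := pclass x y hadj hx0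
            have hi := i.isLt
            have hj := j.isLt
            have evala : Equiv.swap a u (Equiv.swap c w a) = u := by
              rw [Equiv.swap_apply_of_ne_of_ne hac haw, Equiv.swap_apply_left]
            have evalb : Equiv.swap a u (Equiv.swap c w b) = b := by
              rw [Equiv.swap_apply_of_ne_of_ne hbc hbw,
                Equiv.swap_apply_of_ne_of_ne hab.symm hbu]
            have evalc : Equiv.swap a u (Equiv.swap c w c) = w := by
              rw [Equiv.swap_apply_left,
                Equiv.swap_apply_of_ne_of_ne (Ne.symm haw) (Ne.symm huw)]
            rcases (by omega : (i.val = 0 ∧ j.val = 1) ∨ (i.val = 1 ∧ j.val = 0) ∨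
                (i.val = 1 ∧ j.val = 2) ∨ (i.val = 2 ∧ j.val = 1)) with
              ⟨h1, h2⟩ | ⟨h1, h2⟩ | ⟨h1, h2⟩ | ⟨h1, h2⟩
            · have hieq : i = ⟨0, by omega⟩ := Fin.ext h1
              have hjeq : j = ⟨1, by omega⟩ := Fin.ext h2
              rw [hieq] at hip; rw [hjeq] at hjq
              have hxa : x = a := (ha.trans hip).symm
              have hyb : y = b := (hb.trans hjq).symm
              rw [hxa, hyb, evala, evalb] at hco
              exact crossAdj u b (by rw [hmku, hmkb]; exact fun h => hc0c1 h.symm) hco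
            · have hieq : i = ⟨1, by omega⟩ := Fin.ext h1
              have hjeq : j = ⟨0, by omega⟩ := Fin.ext h2
              rw [hieq] at hip; rw [hjeq] at hjq
              have hxb : x = b := (hb.trans hip).symm
              have hya : y = a := (ha.trans hjq).symm
              rw [hxb, hya, evala, evalb] at hco
              exact crossAdj u b (by rw [hmku, hmkb]; exact fun h => hc0c1 h.symm) hco.symm
            · have hieq : i = ⟨1, by omega⟩ := Fin.ext h1
              have hjeq : j = ⟨2, by omega⟩ := Fin.ext h2
              rw [hieq] at hip; rw [hjeq] at hjq
              have hxb : x = b := (hb.trans hip).symm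
              have hyc : y = c := (hc.trans hjq).symm
              rw [hxb, hyc, evalb, evalc] at hco
              exact crossAdj b w (by rw [hmkw, hmkb]; exact fun h => hc0c1 h) hco
            · have hieq : i = ⟨2, by omega⟩ := Fin.ext h1
              have hjeq : j = ⟨1, by omega⟩ := Fin.ext h2
              rw [hieq] at hip; rw [hjeq] at hjq
              have hxc3 : x = c := (hc.trans hip).symm
              have hyb : y = b := (hb.trans hjq).symm
              rw [hxc3, hyb, evalb, evalc] at hco
              exact crossAdj b w (by rw [hmkw, hmkb]; exact fun h => hc0c1 h) hco.symm
      · -- G is a single small path: contradiction with hsingle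
        push_neg at hcyc
        have hall : ∀ c : G.ConnectedComponent, c = c0 := fun c => honly c (hcyc c)
        have hne : Nonempty V := by
          refine ⟨(ψ0.symm ⟨0, by omega⟩).1⟩
        have hconn : G.Connected := by
          rw [SimpleGraph.connected_iff]
          refine ⟨fun u v => ?_, hne⟩
          exact SimpleGraph.ConnectedComponent.exact ((hall (mkc u)).trans (hall (mkc v)).symm)
        have hsupp : c0.supp = Set.univ := by
          apply Set.eq_univ_iff_forall.mpr
          intro x
          rw [SimpleGraph.ConnectedComponent.mem_supp_iff]
          exact hall (mkc x)
        rw [hsupp] at ψ0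
        have := hsingle hconn (nn c0) ⟨(SimpleGraph.induceUnivIso G).symm.trans ψ0⟩
        omega
end

section
/- Let G be a simple graph with girth g ≥ 3, let S ⊆ V(G) with diam(G[S]) = d < g − 2, and let H be a connected subgraph of G disjoint from S. If x and y are distinct vertices of H each having a neighbor in S, then the distance between x and y within H is at least g − d − 2. -/
open SimpleGraph

theorem distance_between_neighbors_of_small_diameter_set
    {V : Type} (G : SimpleGraph V) (g d : ℕ) (hg : 3 ≤ g)
    (hgirth : G.girth = g) (S : Set V)
    (hdiam : (G.induce S).ediam = d) (hd : d < g - 2)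
    (H : G.Subgraph) (hconn : H.Connected) (hdisj : H.verts ∩ S = ∅)
    (x y : V) (hx : x ∈ H.verts) (hy : y ∈ H.verts) (hxy : x ≠ y)
    (hxS : ∃ s ∈ S, G.Adj x s) (hyS : ∃ s ∈ S, G.Adj y s) :
    g - d - 2 ≤ H.coe.dist ⟨x, hx⟩ ⟨y, hy⟩ := by
  classical
  obtain ⟨s, hsS, hxs⟩ := hxS
  obtain ⟨t, htS, hyt⟩ := hyS
  -- a short walk from s to t inside S
  have hedist : (G.induce S).edist ⟨s, hsS⟩ ⟨t, htS⟩ ≤ (d : ℕ∞) := by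
    calc (G.induce S).edist ⟨s, hsS⟩ ⟨t, htS⟩ ≤ (G.induce S).ediam := edist_le_ediam
    _ = (d : ℕ∞) := hdiam
  have hne : (G.induce S).edist ⟨s, hsS⟩ ⟨t, htS⟩ ≠ ⊤ :=
    fun h => by simp [h] at hedist
  obtain ⟨q, hq⟩ := exists_walk_of_edist_ne_top hne
  have hqlen : q.length ≤ d := by
    have := hq.le.trans hedist
    exact_mod_cast this
  -- map it into G
  let f : G.induce S →g G := ⟨Subtype.val, fun h => h⟩
  let qG : G.Walk s t := q.map f
  have hqG_len : qG.length ≤ d := by simpa [qG] using hqlen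
  have hqG_supp : ∀ v ∈ qG.support, v ∈ S := by
    intro v hv
    rw [Walk.support_map, List.mem_map] at hv
    obtain ⟨a, _, rfl⟩ := hv
    exact a.2
  -- walk from x to y through S
  let w : G.Walk x y := Walk.cons hxs (qG.append (Walk.cons hyt.symm Walk.nil))
  let p1 : G.Walk x y := w.bypass
  have hp1 : p1.IsPath := w.bypass_isPath
  have hp1len : p1.length ≤ d + 2 := by
    calc p1.length ≤ w.length := w.length_bypass_le
    _ = qG.length + 2 := by simp [w, Walk.length_append]
    _ ≤ d + 2 := by omega
  have hw_supp : ∀ v ∈ w.support, v = x ∨ v = y ∨ v ∈ S := by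
    intro v hv
    simp only [w, Walk.support_cons, Walk.support_append, Walk.support_cons,
      Walk.support_nil, List.tail_cons, List.mem_cons, List.mem_append] at hv
    rcases hv with h | h | h
    · exact Or.inl h
    · exact Or.inr (Or.inr (hqG_supp v h))
    · simp at h; exact Or.inr (Or.inl h)
  have hp1_supp : ∀ v ∈ p1.support, v = x ∨ v = y ∨ v ∈ S :=
    fun v hv => hw_supp v (w.support_bypass_subset hv)
  -- every edge of p1 has an endpoint in S
  have hw_edge : ∀ e ∈ w.edges, ∃ v ∈ S, v ∈ e := by
    intro e he
    simp only [w, Walk.edges_cons, Walk.edges_append, Walk.edges_cons, Walk.edges_nil,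
      List.mem_cons, List.mem_append] at he
    rcases he with rfl | h | h
    · exact ⟨s, hsS, by simp⟩
    · induction e with
      | h a b =>
        have ha := qG.fst_mem_support_of_mem_edges h
        exact ⟨a, hqG_supp a ha, by simp⟩
    · simp at h; subst h; exact ⟨t, htS, by simp⟩
  have hp1_edge : ∀ e ∈ p1.edges, ∃ v ∈ S, v ∈ e :=
    fun e he => hw_edge e (w.edges_bypass_subset he)
  -- shortest path in H from x to y
  obtain ⟨p2, hp2, hp2len⟩ :=
    (hconn.coe ⟨x, hx⟩ ⟨y, hy⟩).exists_path_of_dist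
  let p2G : G.Walk x y := p2.map H.hom
  have hbom : Function.Injective (H.hom : H.verts → V) := by
    intro a b hab
    exact Subtype.val_injective hab
  have hp2G : p2G.IsPath := Walk.map_isPath_of_injective hbom hp2
  have hp2G_len : p2G.length = H.coe.dist ⟨x, hx⟩ ⟨y, hy⟩ := by
    exact (Walk.length_map _ _).trans hp2len
  have hp2G_supp : ∀ v ∈ p2G.support, v ∈ H.verts := by
    intro v hv
    rw [show p2G.support = p2.support.map H.hom from Walk.support_map _ _, List.mem_map] at hv
    obtain ⟨a, _, rfl⟩ := hv
    exact a.2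
  -- edges of p1 and p2G are disjoint
  have hedge_disj : ∀ e ∈ p1.edges, e ∉ p2G.edges := by
    intro e he1 he2
    obtain ⟨v, hvS, hve⟩ := hp1_edge e he1
    have hvH : v ∈ H.verts := by
      induction e with
      | h a b =>
        rcases Sym2.mem_iff.mp hve with rfl | rfl
        · exact hp2G_supp v (p2G.fst_mem_support_of_mem_edges he2)
        · exact hp2G_supp v (p2G.snd_mem_support_of_mem_edges he2)
    have : v ∈ H.verts ∩ S := ⟨hvH, hvS⟩
    rw [hdisj] at this
    exact this
  -- the cycle
  let c : G.Walk x x := p1.append p2G.reverse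
  have hc : c.IsCycle := by
    refine ⟨⟨⟨?_⟩, ?_⟩, ?_⟩
    · -- edges nodup
      rw [Walk.edges_append]
      refine List.Nodup.append hp1.edges_nodup (by simpa using hp2G.edges_nodup) ?_
      intro e he1 he2
      exact hedge_disj e he1 (by simpa using he2)
    · -- not nil
      intro hnil
      have : c.length = 0 := by rw [hnil]; rfl
      rw [show c.length = p1.length + p2G.reverse.length from Walk.length_append _ _] at this
      have hplen : p1.length = 0 := by omega
      exact hxy (Walk.eq_of_length_eq_zero hplen)
    · -- support tail nodup
      rw [Walk.tail_support_append]
      have hn1 := hp1.support_nodup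
      rw [p1.support_eq_cons, List.nodup_cons] at hn1
      have hn2 := hp2G.reverse.support_nodup
      rw [p2G.reverse.support_eq_cons, List.nodup_cons] at hn2
      have h1 : p1.support.tail.Nodup := hn1.2
      have h2 : p2G.reverse.support.tail.Nodup := hn2.2
      refine List.Nodup.append h1 h2 ?_
      intro a ha1 ha2
      -- a ≠ x since p1.support = x :: tail is nodup
      have hax : a ≠ x := fun h => hn1.1 (h ▸ ha1)
      have hay : a ≠ y := fun h => hn2.1 (h ▸ ha2)
      have haS : a ∈ S := by
        rcases hp1_supp a (List.mem_of_mem_tail ha1) with h | h | h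
        · exact absurd h hax
        · exact absurd h hay
        · exact h
      have haH : a ∈ H.verts := by
        have : a ∈ p2G.support := by
          have := List.mem_of_mem_tail ha2
          rwa [Walk.support_reverse, List.mem_reverse] at this
        exact hp2G_supp a this
      have : a ∈ H.verts ∩ S := ⟨haH, haS⟩
      rw [hdisj] at this
      exact this
  -- girth bound
  have hacyc : ¬ G.IsAcyclic := fun h => h _ hc
  have hegirth : G.egirth = (g : ℕ∞) := by
    have h1 : G.egirth ≠ ⊤ := egirth_eq_top.not.mpr hacyc
    rw [← hgirth, girth, ENat.coe_toNat h1]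
  have hgle : (g : ℕ∞) ≤ c.length := by
    rw [← hegirth, egirth]
    exact le_trans (iInf_le _ x) (le_trans (iInf_le _ c) (iInf_le _ hc))
  have hglen : g ≤ c.length := by exact_mod_cast hgle
  have hclen : c.length = p1.length + p2G.length := by
    rw [show c.length = p1.length + p2G.reverse.length from Walk.length_append _ _,
      Walk.length_reverse]
  rw [hclen, hp2G_len] at hglen
  omega
end

section
/- Let C be a cycle of odd length g ≥ 5 with girth considerations in an ambient graph G of girth g, let H be a connected subgraph of G − V(C), and suppose x, y ∈ V(H) are distinct vertices each having a unique neighbor x', y' respectively on C. Then d_H(x,y) ≥ g − 2 − d_C(x',y'), and in particular d_H(x,y) ≥ (g+1)/2 − 2. -/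
open SimpleGraph Walk
open Fin.NatCast Fin.CommRing

lemma cycle_walk_exists {m : ℕ} (u : Fin (m + 2)) (d : ℕ) :
    ∃ w : (SimpleGraph.cycleGraph (m + 2)).Walk u (u + (d : Fin (m + 2))),
      w.length = d := by
  induction d with
  | zero => exact ⟨SimpleGraph.Walk.nil.copy rfl (by simp), by simp⟩
  | succ d ih =>
    obtain ⟨w, hw⟩ := ih
    have hadj : (SimpleGraph.cycleGraph (m + 2)).Adj (u + (d : Fin (m + 2)))
        (u + (((d + 1 : ℕ)) : Fin (m + 2))) := by
      rw [SimpleGraph.cycleGraph_adj]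
      right
      push_cast
      ring
    exact ⟨w.concat hadj, by simp [SimpleGraph.Walk.length_concat, hw]⟩

lemma cycle_dist_le_half {m : ℕ} (u v : Fin (m + 2)) :
    (SimpleGraph.cycleGraph (m + 2)).dist u v ≤ (m + 2) / 2 := by
  rcases eq_or_ne u v with rfl | huv
  · rw [SimpleGraph.dist_self]
    exact Nat.zero_le _
  · have h1 : (SimpleGraph.cycleGraph (m + 2)).dist u v ≤ (v - u).val := by
      obtain ⟨w, hw⟩ := cycle_walk_exists u (v - u).val
      have he : u + (((v - u).val : ℕ) : Fin (m + 2)) = v := by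
        rw [Fin.cast_val_eq_self]; ring
      have := SimpleGraph.dist_le (w.copy rfl he)
      simpa [hw] using this
    have h2 : (SimpleGraph.cycleGraph (m + 2)).dist u v ≤ (u - v).val := by
      rw [SimpleGraph.dist_comm]
      obtain ⟨w, hw⟩ := cycle_walk_exists v (u - v).val
      have he : v + (((u - v).val : ℕ) : Fin (m + 2)) = u := by
        rw [Fin.cast_val_eq_self]; ring
      have := SimpleGraph.dist_le (w.copy rfl he)
      simpa [hw] using this
    have hsum : (v - u).val + (u - v).val = m + 2 := by
      have h0 : ((v - u) + (u - v)) = (0 : Fin (m + 2)) := by ring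
      have hval : ((v - u).val + (u - v).val) % (m + 2) = 0 := by
        have := congrArg Fin.val h0
        rwa [Fin.val_add, Fin.val_zero] at this
      have hdvd : (m + 2) ∣ ((v - u).val + (u - v).val) :=
        Nat.dvd_of_mod_eq_zero hval
      have ha : (v - u).val ≠ 0 := by
        intro h
        have : v - u = 0 := Fin.ext (by simp [h])
        exact huv.symm (sub_eq_zero.mp this)
      have hb : (u - v).val ≠ 0 := by
        intro h
        have : u - v = 0 := Fin.ext (by simp [h])
        exact huv (sub_eq_zero.mp this)
      have hla : (v - u).val < m + 2 := (v - u).is_lt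
      have hlb : (u - v).val < m + 2 := (u - v).is_lt
      obtain ⟨k, hk⟩ := hdvd
      have hk2 : k < 2 := by
        by_contra h
        push_neg at h
        have : (m + 2) * 2 ≤ (m + 2) * k := Nat.mul_le_mul_left _ h
        omega
      interval_cases k <;> omega
    omega

theorem dist_in_component_lower_bound
    {V : Type} (G : SimpleGraph V) (g : ℕ) (hodd : Odd g) (hg : 5 ≤ g)
    (hgirth : G.girth = g) (f : SimpleGraph.cycleGraph g ↪g G)
    (H : Set V) (hdisj : ∀ i : Fin g, f i ∉ H)
    (hconn : (G.induce H).Connected)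
    (x y : V) (hx : x ∈ H) (hy : y ∈ H) (hxy : x ≠ y)
    (i j : Fin g)
    (hxi : G.Adj x (f i)) (hxiu : ∀ k : Fin g, G.Adj x (f k) → k = i)
    (hyj : G.Adj y (f j)) (hyju : ∀ k : Fin g, G.Adj y (f k) → k = j) :
    g - 2 - (SimpleGraph.cycleGraph g).dist i j ≤ (G.induce H).dist ⟨x, hx⟩ ⟨y, hy⟩ ∧
    (g + 1) / 2 - 2 ≤ (G.induce H).dist ⟨x, hx⟩ ⟨y, hy⟩ := by
  obtain ⟨m, rfl⟩ : ∃ m, g = m + 2 := ⟨g - 2, by omega⟩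
  -- shortest path in H
  obtain ⟨p, hp, hpl⟩ := hconn.exists_path_of_dist ⟨x, hx⟩ ⟨y, hy⟩
  -- shortest path in the cycle
  have hcconn : (SimpleGraph.cycleGraph (m + 2)).Connected :=
    SimpleGraph.cycleGraph_connected (n := m + 1)
  obtain ⟨q, hq, hql⟩ := hcconn.exists_path_of_dist j i
  -- map to G
  let emb : G.induce H ↪g G := SimpleGraph.Embedding.induce H
  let p' : G.Walk x y := p.map emb.toHom
  let q' : G.Walk (f j) (f i) := q.map f.toHom
  have hp' : p'.IsPath := SimpleGraph.Walk.map_isPath_of_injective emb.injective hp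
  have hq' : q'.IsPath := SimpleGraph.Walk.map_isPath_of_injective f.injective hq
  have hps : ∀ v ∈ p'.support, v ∈ H := by
    intro v hv
    rw [show p'.support = _ from SimpleGraph.Walk.support_map _ _] at hv
    obtain ⟨⟨u, hu⟩, _, rfl⟩ := List.mem_map.mp hv
    exact hu
  have hqs : ∀ v ∈ q'.support, ∃ k, f k = v := by
    intro v hv
    rw [SimpleGraph.Walk.support_map] at hv
    obtain ⟨u, _, rfl⟩ := List.mem_map.mp hv
    exact ⟨u, rfl⟩
  -- the closed walk
  let w : G.Walk x x :=
    p'.append (SimpleGraph.Walk.cons hyj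
      (q'.append (SimpleGraph.Walk.cons hxi.symm SimpleGraph.Walk.nil)))
  have hyR : ∀ k : Fin (m + 2), y ≠ f k := fun k h => hdisj k (h ▸ hy)
  have hxR : ∀ k : Fin (m + 2), x ≠ f k := fun k h => hdisj k (h ▸ hx)
  -- edge facts
  have he1 : s(y, f j) ∉ p'.edges := fun h =>
    hdisj j (hps _ (p'.snd_mem_support_of_mem_edges h))
  have he2 : s(f i, x) ∉ p'.edges := fun h =>
    hdisj i (hps _ (p'.fst_mem_support_of_mem_edges h))
  have he3 : s(y, f j) ∉ q'.edges := fun h => by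
    obtain ⟨k, hk⟩ := hqs _ (q'.fst_mem_support_of_mem_edges h)
    exact hyR k hk.symm
  have he4 : s(f i, x) ∉ q'.edges := fun h => by
    obtain ⟨k, hk⟩ := hqs _ (q'.snd_mem_support_of_mem_edges h)
    exact hxR k hk.symm
  have he5 : s(y, f j) ≠ s(f i, x) := by
    intro h
    rcases Sym2.eq_iff.mp h with ⟨h1, h2⟩ | ⟨h1, h2⟩
    · exact hyR i h1
    · exact hxy h1.symm
  have hedisj : ∀ e, e ∈ p'.edges → e ∉ q'.edges := by
    intro e hep heq
    induction e with
    | h a b =>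
      obtain ⟨k, hk⟩ := hqs _ (q'.fst_mem_support_of_mem_edges heq)
      exact hdisj k (hk ▸ hps _ (p'.fst_mem_support_of_mem_edges hep))
  have hxp : x ∉ p'.support.tail := by
    have := hp'.support_nodup
    rw [p'.support_eq_cons] at this
    exact (List.nodup_cons.mp this).1
  have hxq : x ∉ q'.support := fun h => by
    obtain ⟨k, hk⟩ := hqs _ h
    exact hxR k hk.symm
  have hsdisj : ∀ v ∈ p'.support.tail, v ∉ q'.support := by
    intro v hv hvq
    obtain ⟨k, hk⟩ := hqs _ hvq
    exact hdisj k (hk ▸ hps _ (List.mem_of_mem_tail hv))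
  -- w is a cycle
  have hcyc : w.IsCycle := by
    rw [SimpleGraph.Walk.isCycle_def]
    refine ⟨?_, ?_, ?_⟩
    · rw [SimpleGraph.Walk.isTrail_def]
      show List.Nodup w.edges
      have hwe : w.edges = p'.edges ++ (s(y, f j) :: (q'.edges ++ [s(f i, x)])) := by
        simp [w, SimpleGraph.Walk.edges_append, SimpleGraph.Walk.edges_cons]
      rw [hwe]
      have inner2 : (q'.edges ++ [s(f i, x)]).Nodup := by
        refine hq'.isTrail.edges_nodup.append (List.nodup_singleton _) ?_
        intro e he hee
        rw [List.mem_singleton] at hee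
        subst hee
        exact he4 he
      have inner : (s(y, f j) :: (q'.edges ++ [s(f i, x)])).Nodup := by
        refine List.nodup_cons.mpr ⟨?_, inner2⟩
        intro h
        rcases List.mem_append.mp h with h | h
        · exact he3 h
        · exact he5 (List.mem_singleton.mp h)
      refine hp'.isTrail.edges_nodup.append inner ?_
      intro e hep hee
      rcases List.mem_cons.mp hee with rfl | hee'
      · exact he1 hep
      · rcases List.mem_append.mp hee' with h | h
        · exact hedisj e hep h
        · rw [List.mem_singleton] at h
          subst h
          exact he2 hep
    · intro h
      have := congrArg SimpleGraph.Walk.length h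
      simp [w, SimpleGraph.Walk.length_append] at this
    · have hws : w.support.tail = p'.support.tail ++ (q'.support ++ [x]) := by
        have : w.support = p'.support ++ (q'.support ++ [x]) := by
          simp [w, SimpleGraph.Walk.support_append]
        rw [this, p'.support_eq_cons]
        rfl
      rw [hws]
      have hpt : p'.support.tail.Nodup :=
        hp'.support_nodup.sublist (List.tail_sublist _)
      have hqx : (q'.support ++ [x]).Nodup := by
        refine hq'.support_nodup.append (List.nodup_singleton x) ?_
        intro v hv hvx
        exact hxq ((List.mem_singleton.mp hvx) ▸ hv)
      refine hpt.append hqx ?_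
      intro v hv hvq
      rcases List.mem_append.mp hvq with h | h
      · exact hsdisj v hv h
      · rw [List.mem_singleton] at h
        subst h
        exact hxp hv
  -- girth bound
  have hE : G.egirth ≤ (w.length : ℕ∞) :=
    iInf_le_of_le x (iInf_le_of_le w (iInf_le _ hcyc))
  have hgl : m + 2 ≤ w.length := by
    rw [← hgirth]
    have := ENat.toNat_le_toNat hE (by simp)
    simpa [SimpleGraph.girth] using this
  have hwl : w.length = (G.induce H).dist ⟨x, hx⟩ ⟨y, hy⟩ +
      (SimpleGraph.cycleGraph (m + 2)).dist i j + 2 := by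
    have : w.length = p'.length + (1 + (q'.length + 1)) := by
      simp [w, SimpleGraph.Walk.length_append]
      omega
    rw [this]
    have hp'l : p'.length = p.length := by
      exact SimpleGraph.Walk.length_map _ _
    have hq'l : q'.length = q.length := by
      simp only [q', SimpleGraph.Walk.length_map]
    rw [SimpleGraph.dist_comm] at hql
    rw [hp'l, hq'l, hpl, hql]
    omega
  have hdc : (SimpleGraph.cycleGraph (m + 2)).dist i j ≤ (m + 2) / 2 :=
    cycle_dist_le_half i j
  obtain ⟨t, ht⟩ := hodd
  constructor <;> omega
end

section
/- Suppose G is a graph of girth g, C is a g-cycle in G with g odd and g ≥ 5, H is a component of G − V(C), every vertex of H with a neighbor on C has a unique such neighbor (denoted by the prime operation), and {x,y}, {x,z} are two distinct pairs of vertices of H with d_H(x,y) = d_H(x,z) = (g+1)/2 − 2. Then y' ≠ z'. -/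
theorem bad_pairs_have_distinct_neighbors_on_cycle
    {V : Type} (G : SimpleGraph V) (g : ℕ) (hodd : Odd g) (hg : 5 ≤ g)
    (hgirth : G.girth = g) (f : SimpleGraph.cycleGraph g ↪g G)
    (H : Set V) (hdisj : ∀ i : Fin g, f i ∉ H)
    (hconn : (G.induce H).Connected)
    (x y z : V) (hx : x ∈ H) (hy : y ∈ H) (hz : z ∈ H)
    (hxy : x ≠ y) (hxz : x ≠ z) (hyz : y ≠ z)
    (j k : Fin g)
    (hyj : G.Adj y (f j)) (hyju : ∀ l : Fin g, G.Adj y (f l) → l = j)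
    (hzk : G.Adj z (f k)) (hzku : ∀ l : Fin g, G.Adj z (f l) → l = k)
    (hbad1 : (G.induce H).dist ⟨x, hx⟩ ⟨y, hy⟩ = (g + 1) / 2 - 2)
    (hbad2 : (G.induce H).dist ⟨x, hx⟩ ⟨z, hz⟩ = (g + 1) / 2 - 2) :
    f j ≠ f k := by
  classical
  intro hjk
  obtain ⟨m, hm⟩ := hodd
  -- distance in H between y and z is small
  have hdyz : (G.induce H).dist ⟨y, hy⟩ ⟨z, hz⟩ ≤ g - 3 := by
    calc (G.induce H).dist ⟨y, hy⟩ ⟨z, hz⟩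
        ≤ (G.induce H).dist ⟨y, hy⟩ ⟨x, hx⟩ + (G.induce H).dist ⟨x, hx⟩ ⟨z, hz⟩ :=
          hconn.dist_triangle
      _ ≤ g - 3 := by
          rw [SimpleGraph.dist_comm, hbad1, hbad2]; omega
  -- get a path from y to z in the induced graph
  obtain ⟨P, hPlen⟩ := hconn.exists_walk_length_eq_dist ⟨y, hy⟩ ⟨z, hz⟩
  -- map it to G
  let ι : G.induce H →g G := ⟨Subtype.val, fun h => h⟩
  have hinj : Function.Injective ι := Subtype.val_injective
  let Q : G.Walk y z := (P.bypass.map ι)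
  have hQpath : Q.IsPath := SimpleGraph.Walk.map_isPath_of_injective hinj P.bypass_isPath
  have hQlen : Q.length ≤ g - 3 := by
    have := P.length_bypass_le
    simpa [Q] using le_trans (by simpa [Q] using P.length_bypass_le) (hPlen ▸ hdyz)
  have hQsupp : ∀ v ∈ Q.support, v ∈ H := by
    intro v hv
    rw [show Q = P.bypass.map ι from rfl, SimpleGraph.Walk.support_map, List.mem_map] at hv
    obtain ⟨⟨w, hw⟩, _, rfl⟩ := hv
    exact hw
  have hfjQ : f j ∉ Q.support := fun h => hdisj j (hQsupp _ h)
  -- build the short cycle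
  have hzfj : G.Adj z (f j) := hjk ▸ hzk
  let R : G.Walk y (f j) := Q.concat hzfj
  have hRpath : R.IsPath := by
    rw [show R = Q.concat hzfj from rfl, SimpleGraph.Walk.isPath_def, SimpleGraph.Walk.support_concat]
    rw [List.nodup_append]
    refine ⟨hQpath.support_nodup, List.nodup_singleton _, ?_⟩
    intro a ha b hb
    rw [List.mem_singleton] at hb
    exact fun hab => by subst hb; subst hab; exact hfjQ ha
  have hedge : s(f j, y) ∉ R.edges := by
    rw [show R = Q.concat hzfj from rfl, SimpleGraph.Walk.edges_concat, List.concat_eq_append, List.mem_append, List.mem_singleton]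
    rintro (h | h)
    · exact hfjQ (SimpleGraph.Walk.fst_mem_support_of_mem_edges Q
        (by rwa [Sym2.eq_swap] at h))
    · rw [Sym2.eq_iff] at h
      rcases h with ⟨h1, h2⟩ | ⟨h1, h2⟩
      · exact hdisj j (h1 ▸ hz)
      · exact hyz h2
  have hadj : G.Adj (f j) y := hyj.symm
  have hcyc : (SimpleGraph.Walk.cons hadj R).IsCycle :=
    (SimpleGraph.Walk.cons_isCycle_iff R hadj).mpr ⟨hRpath, hedge⟩
  -- girth bound
  have hlen : (SimpleGraph.Walk.cons hadj R).length = Q.length + 2 := by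
    simp [R, SimpleGraph.Walk.length_concat]
  have hgle : G.girth ≤ (SimpleGraph.Walk.cons hadj R).length := by
    have h1 : G.egirth ≤ ((SimpleGraph.Walk.cons hadj R).length : ℕ∞) :=
      iInf_le_of_le (f j) (iInf_le_of_le (SimpleGraph.Walk.cons hadj R) (iInf_le _ hcyc))
    have h2 := ENat.toNat_le_toNat h1 (ENat.coe_ne_top _)
    rwa [ENat.toNat_coe] at h2
  rw [hgirth, hlen] at hgle
  omega
end
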